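/- For densities f and h and α > 0, the density power divergence d_α(h,f) equals zero if and only if h = f almost everywhere. -/

import Mathlib

/-!
The integrand `f^{1+α} - (1 + 1/α) h f^α + h^{1+α}/α` equals `(1+α)/α` times the gap in Young's
inequality `h · f^α ≤ h^p/p + (f^α)^q/q` for the conjugate exponents `p = 1 + α`,
`q = (1 + α)/α`. It is therefore nonnegative, and it vanishes exactly where equality holds in
Young's inequality, i.e. where `h^{1+α} = f^{1+α}`, i.e. where `h = f`.
-/

open MeasureTheory

namespace DensityPowerDivergence

noncomputable def integrand (α h f : ℝ) : ℝ :=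
  f ^ (1 + α) - (1 + 1/α) * (h * f ^ α) + (1/α) * h ^ (1 + α)

variable {α h f : ℝ}

lemma holderConjugate_one_add (hα : 0 < α) : (1 + α).HolderConjugate ((1 + α) / α) :=
  (Real.holderConjugate_iff_eq_conjExponent (by linarith)).2 (by ring_nf)

lemma rpow_rpow_one_add_div (hα : 0 < α) (hf : 0 ≤ f) :
    (f ^ α) ^ ((1 + α) / α) = f ^ (1 + α) := by
  rw [← Real.rpow_mul hf, mul_div_cancel₀ _ hα.ne']

lemma integrand_eq_mul_young_gap (hα : 0 < α) (hf : 0 ≤ f) :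
    integrand α h f = (1 + α) / α *
      (h ^ (1 + α) / (1 + α) + (f ^ α) ^ ((1 + α) / α) / ((1 + α) / α) - h * f ^ α) := by
  rw [integrand, rpow_rpow_one_add_div hα hf]
  field_simp
  ring

lemma integrand_nonneg (hα : 0 < α) (hh : 0 ≤ h) (hf : 0 ≤ f) : 0 ≤ integrand α h f := by
  rw [integrand_eq_mul_young_gap hα hf]
  have young :=
    Real.young_inequality_of_nonneg hh (Real.rpow_nonneg hf α) (holderConjugate_one_add hα)
  exact mul_nonneg (by positivity) (sub_nonneg.2 young)

lemma integrand_eq_zero_iff (hα : 0 < α) (hh : 0 ≤ h) (hf : 0 ≤ f) :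
    integrand α h f = 0 ↔ h = f := by
  have hp : (0 : ℝ) < 1 + α := by linarith
  rw [integrand_eq_mul_young_gap hα hf, mul_eq_zero, sub_eq_zero, eq_comm (b := h * f ^ α),
    Real.young_inequality_eq_iff_of_nonneg hh (Real.rpow_nonneg hf α) (holderConjugate_one_add hα),
    rpow_rpow_one_add_div hα hf, Real.rpow_left_inj hh hf hp.ne']
  simp [hp.ne', hα.ne']

end DensityPowerDivergence

open DensityPowerDivergence

theorem dpd_eq_zero_iff_general (f h : ℝ → ℝ)
    (hf0 : ∀ x, 0 ≤ f x) (hh0 : ∀ x, 0 ≤ h x)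
    (α : ℝ) (hα : 0 < α)
    (hint1 : Integrable (fun x => f x ^ (1 + α)))
    (hint2 : Integrable (fun x => h x * f x ^ α))
    (hint3 : Integrable (fun x => h x ^ (1 + α))) :
    (∫ x, (f x ^ (1 + α) - (1 + 1/α) * (h x * f x ^ α) + (1/α) * h x ^ (1 + α))) = 0 ↔
      h =ᵐ[volume] f := by
  have hint : Integrable fun x => integrand α (h x) (f x) :=
    (hint1.sub (hint2.const_mul _)).add (hint3.const_mul _)
  calc (∫ x, integrand α (h x) (f x)) = 0
      ↔ (fun x => integrand α (h x) (f x)) =ᵐ[volume] 0 :=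
        integral_eq_zero_iff_of_nonneg (fun x => integrand_nonneg hα (hh0 x) (hf0 x)) hint
    _ ↔ h =ᵐ[volume] f :=
        Filter.eventually_congr <| .of_forall fun x => integrand_eq_zero_iff hα (hh0 x) (hf0 x)

/-- The density power divergence `d_α(h, f)` vanishes if and only if `h = f`
almost everywhere (w.r.t. Lebesgue measure), for any `α > 0`. -/
theorem dpd_eq_zero_iff (f h : ℝ → ℝ) (hf : Measurable f) (hh : Measurable h)
    (hf0 : ∀ x, 0 ≤ f x) (hh0 : ∀ x, 0 ≤ h x)
    (hf1 : ∫ x, f x = 1) (hh1 : ∫ x, h x = 1)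
    (α : ℝ) (hα : 0 < α)
    (hint1 : Integrable (fun x => f x ^ (1 + α)))
    (hint2 : Integrable (fun x => h x * f x ^ α))
    (hint3 : Integrable (fun x => h x ^ (1 + α))) :
    (∫ x, (f x ^ (1 + α) - (1 + 1/α) * (h x * f x ^ α) + (1/α) * h x ^ (1 + α))) = 0 ↔
      h =ᵐ[volume] f :=
  dpd_eq_zero_iff_general f h hf0 hh0 α hα hint1 hint2 hint3
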